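/- For t ≥ 4, (t-1)·F_{t-1} - b_{t-2} = Σ_{i+j=t, i,j≥1} F_i·F_j, where b_s denotes the sum of cardinalities of nice subsets of {1,...,s-1}. -/
import Mathlib


/-- The set of "nice" subsets of {1,...,t-1}: no two elements differ by exactly 1. -/
def niceSets (t : ℕ) : Finset (Finset ℕ) :=
  (Finset.Icc 1 (t - 1)).powerset.filter (fun B => ∀ x ∈ B, x + 1 ∉ B)

/-- b_t: the sum of the cardinalities of the nice subsets of {1,...,t-1}. -/
def b (t : ℕ) : ℕ := ∑ B ∈ niceSets t, B.card

/-- φ_n = Σ_{i+j=n, i,j ≥ 1} F_i F_j. -/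
def phi (n : ℕ) : ℕ :=
  ∑ i ∈ Finset.range (n + 1), ∑ j ∈ Finset.range (n + 1),
    if i + j = n ∧ 1 ≤ i ∧ 1 ≤ j then Nat.fib i * Nat.fib j else 0

/-- Single-sum version of the Fibonacci convolution. -/
def Q (m : ℕ) : ℕ := ∑ k ∈ Finset.range m, Nat.fib (k + 1) * Nat.fib (m - k)

lemma mem_niceSets {t : ℕ} {B : Finset ℕ} :
    B ∈ niceSets t ↔ B ⊆ Finset.Icc 1 (t - 1) ∧ ∀ x ∈ B, x + 1 ∉ B := by
  simp [niceSets]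

lemma Q_rec (m : ℕ) : Q (m + 2) = Q (m + 1) + Q m + Nat.fib (m + 2) := by
  have h1 : Q (m + 2)
      = (∑ k ∈ Finset.range (m + 1), Nat.fib (k + 1) * Nat.fib (m + 2 - k))
        + Nat.fib (m + 2) * Nat.fib 1 := by
    rw [Q, Finset.sum_range_succ, show m + 2 - (m + 1) = 1 from by omega]
  have h2 : ∀ k ∈ Finset.range (m + 1),
      Nat.fib (k + 1) * Nat.fib (m + 2 - k)
        = Nat.fib (k + 1) * Nat.fib (m + 1 - k) + Nat.fib (k + 1) * Nat.fib (m - k) := by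
    intro k hk
    rw [Finset.mem_range] at hk
    have : m + 2 - k = (m - k) + 2 := by omega
    rw [this, Nat.fib_add_two]
    have : m + 1 - k = (m - k) + 1 := by omega
    rw [this, Nat.mul_add]
    ring
  rw [Finset.sum_congr rfl h2, Finset.sum_add_distrib] at h1
  have h3 : (∑ k ∈ Finset.range (m + 1), Nat.fib (k + 1) * Nat.fib (m + 1 - k)) = Q (m + 1) := rfl
  have h4 : (∑ k ∈ Finset.range (m + 1), Nat.fib (k + 1) * Nat.fib (m - k)) = Q m := by
    rw [Finset.sum_range_succ]
    simp [Q]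
  rw [h3, h4] at h1
  simpa [Nat.fib_one] using h1

lemma phi_eq_Q (m : ℕ) : phi (m + 1) = Q m := by
  have h1 : ∀ i ∈ Finset.range (m + 2),
      (∑ j ∈ Finset.range (m + 2),
        if i + j = m + 1 ∧ 1 ≤ i ∧ 1 ≤ j then Nat.fib i * Nat.fib j else 0)
      = if 1 ≤ i ∧ 1 ≤ m + 1 - i then Nat.fib i * Nat.fib (m + 1 - i) else 0 := by
    intro i hi
    rw [Finset.mem_range] at hi
    rw [Finset.sum_eq_single (m + 1 - i)]
    · have : i + (m + 1 - i) = m + 1 := by omega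
      simp [this]
    · intro j hj hne
      have : ¬ (i + j = m + 1 ∧ 1 ≤ i ∧ 1 ≤ j) := by
        rintro ⟨h, -, -⟩; omega
      simp [this]
    · intro h
      exfalso; apply h; rw [Finset.mem_range]; omega
  rw [phi, Finset.sum_congr rfl h1]
  rw [Finset.sum_range_succ']
  have h0 : (if 1 ≤ 0 ∧ 1 ≤ m + 1 - 0 then Nat.fib 0 * Nat.fib (m + 1 - 0) else 0) = 0 := by
    norm_num
  rw [h0, Nat.add_zero, Finset.sum_range_succ]
  have hm : (if 1 ≤ m + 1 ∧ 1 ≤ m + 1 - (m + 1) then Nat.fib (m + 1) * Nat.fib (m + 1 - (m + 1)) else 0) = 0 := by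
    norm_num
  rw [hm, Nat.add_zero, Q]
  apply Finset.sum_congr rfl
  intro k hk
  rw [Finset.mem_range] at hk
  have hc : 1 ≤ k + 1 ∧ 1 ≤ m + 1 - (k + 1) := by omega
  rw [if_pos hc]
  congr 2
  omega

/-- Key bijection: nice subsets of {1,...,s+1} containing s+1 correspond to
nice subsets of {1,...,s-1} (by erasing s+1). -/
lemma sum_filter_mem (s : ℕ) (f : ℕ → ℕ) :
    ∑ B ∈ (niceSets (s + 2)).filter (fun B => s + 1 ∈ B), f B.card
      = ∑ B ∈ niceSets s, f (B.card + 1) := by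
  apply Finset.sum_nbij' (i := fun B => B.erase (s + 1)) (j := fun B => insert (s + 1) B)
  · intro B hB
    rw [Finset.mem_filter] at hB
    obtain ⟨hB, hmem⟩ := hB
    rw [mem_niceSets] at hB ⊢
    obtain ⟨hsub, hnice⟩ := hB
    constructor
    · intro x hx
      rw [Finset.mem_erase] at hx
      obtain ⟨hne, hxB⟩ := hx
      have h1 := hsub hxB
      rw [Finset.mem_Icc] at h1 ⊢
      have hxs : x ≠ s := by
        rintro rfl
        exact hnice x hxB hmem
      omega
    · intro x hx
      have hxB := Finset.mem_of_mem_erase hx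
      intro hcon
      exact hnice x hxB (Finset.mem_of_mem_erase hcon)
  · intro B hB
    rw [mem_niceSets] at hB
    obtain ⟨hsub, hnice⟩ := hB
    rw [Finset.mem_filter]
    have hnot : s + 1 ∉ B := by
      intro h
      have := hsub h
      rw [Finset.mem_Icc] at this
      omega
    refine ⟨?_, Finset.mem_insert_self _ _⟩
    rw [mem_niceSets]
    constructor
    · intro x hx
      rw [Finset.mem_insert] at hx
      rcases hx with rfl | hx
      · rw [Finset.mem_Icc]; omega
      · have := hsub hx
        rw [Finset.mem_Icc] at this ⊢
        omega
    · intro x hx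
      rw [Finset.mem_insert] at hx
      intro hcon
      rw [Finset.mem_insert] at hcon
      rcases hx with rfl | hx
      · rcases hcon with h | h
        · omega
        · have := hsub h
          rw [Finset.mem_Icc] at this
          omega
      · have hx1 := hsub hx
        rw [Finset.mem_Icc] at hx1
        rcases hcon with h | h
        · omega
        · exact hnice x hx h
  · intro B hB
    rw [Finset.mem_filter] at hB
    exact Finset.insert_erase hB.2
  · intro B hB
    rw [mem_niceSets] at hB
    apply Finset.erase_insert
    intro h
    have := hB.1 h
    rw [Finset.mem_Icc] at this
    omega
  · intro B hB
    rw [Finset.mem_filter] at hB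
    have h1 : (B.erase (s + 1)).card = B.card - 1 := Finset.card_erase_of_mem hB.2
    have h2 : 1 ≤ B.card := Finset.card_pos.mpr ⟨s + 1, hB.2⟩
    congr 1
    omega

lemma filter_not_mem (s : ℕ) :
    (niceSets (s + 2)).filter (fun B => s + 1 ∉ B) = niceSets (s + 1) := by
  ext B
  rw [Finset.mem_filter, mem_niceSets, mem_niceSets]
  constructor
  · rintro ⟨⟨hsub, hnice⟩, hnot⟩
    refine ⟨?_, hnice⟩
    intro x hx
    have := hsub hx
    rw [Finset.mem_Icc] at this ⊢
    have : x ≠ s + 1 := by rintro rfl; exact hnot hx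
    omega
  · rintro ⟨hsub, hnice⟩
    have hnot : s + 1 ∉ B := by
      intro h
      have := hsub h
      rw [Finset.mem_Icc] at this
      omega
    refine ⟨⟨?_, hnice⟩, hnot⟩
    intro x hx
    have := hsub hx
    rw [Finset.mem_Icc] at this ⊢
    omega

lemma sum_split (s : ℕ) (f : ℕ → ℕ) :
    ∑ B ∈ niceSets (s + 2), f B.card
      = (∑ B ∈ niceSets (s + 1), f B.card) + ∑ B ∈ niceSets s, f (B.card + 1) := by
  rw [← Finset.sum_filter_add_sum_filter_not (niceSets (s + 2)) (fun B => s + 1 ∈ B)]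
  rw [sum_filter_mem, filter_not_mem]
  ring

lemma card_nice (s : ℕ) : (niceSets s).card = Nat.fib (s + 1) := by
  induction s using Nat.twoStepInduction with
  | zero => decide
  | one => decide
  | more s ih1 ih2 =>
    have h := sum_split s (fun _ => 1)
    simp only [Finset.sum_const, Nat.smul_one_eq_cast, Nat.cast_id] at h
    have ih2' : (niceSets (s + 1)).card = Nat.fib (s + 2) := ih2
    have h3 : Nat.fib (s + 3) = Nat.fib (s + 1) + Nat.fib (s + 2) := Nat.fib_add_two (n := s + 1)
    show (niceSets (s + 2)).card = Nat.fib (s + 3)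
    omega

lemma b_rec (s : ℕ) : b (s + 2) = b (s + 1) + b s + Nat.fib (s + 1) := by
  have h := sum_split s (fun n => n)
  rw [Finset.sum_add_distrib] at h
  simp only [Finset.sum_const, Nat.smul_one_eq_cast, Nat.cast_id] at h
  simp only [b]
  rw [h, card_nice]
  omega

lemma phi_rec (s : ℕ) : phi (s + 2) = phi (s + 1) + phi s + Nat.fib (s + 1) := by
  cases s with
  | zero => decide
  | succ k =>
    rw [phi_eq_Q, phi_eq_Q, phi_eq_Q, Q_rec]

lemma b_eq_phi (s : ℕ) : b s = phi s := by
  induction s using Nat.twoStepInduction with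
  | zero => decide
  | one => decide
  | more s ih1 ih2 => rw [b_rec, phi_rec, ih1, ih2]

lemma QQ (n : ℕ) : Q (n + 2) + Q n = (n + 2) * Nat.fib (n + 2) := by
  induction n using Nat.twoStepInduction with
  | zero => decide
  | one => decide
  | more n ih1 ih2 =>
    have r1 : Q (n + 4) = Q (n + 3) + Q (n + 2) + Nat.fib (n + 4) := Q_rec (n + 2)
    have r2 : Q (n + 2) = Q (n + 1) + Q n + Nat.fib (n + 2) := Q_rec n
    have ih2' : Q (n + 3) + Q (n + 1) = (n + 3) * Nat.fib (n + 3) := ih2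
    have ih1' : Q (n + 2) + Q n = (n + 2) * Nat.fib (n + 2) := ih1
    have hf : Nat.fib (n + 4) = Nat.fib (n + 2) + Nat.fib (n + 3) := Nat.fib_add_two (n := n + 2)
    have e : (n + 4) * Nat.fib (n + 4)
        = (n + 3) * Nat.fib (n + 3) + (n + 2) * Nat.fib (n + 2)
          + Nat.fib (n + 3) + 2 * Nat.fib (n + 2) := by
      rw [hf]; ring
    show Q (n + 4) + Q (n + 2) = (n + 4) * Nat.fib (n + 4)
    omega

/-- For t ≥ 4, (t-1)·F_{t-1} - b_{t-2} = Σ_{i+j=t, i,j≥1} F_i F_j. -/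
theorem key_identity (t : ℕ) (ht : 4 ≤ t) :
    ((t : ℤ) - 1) * (Nat.fib (t - 1) : ℤ) - (b (t - 2) : ℤ) = (phi t : ℤ) := by
  obtain ⟨n, rfl⟩ : ∃ n, t = n + 4 := ⟨t - 4, by omega⟩
  have h1 : b (n + 4 - 2) = Q (n + 1) := by
    rw [show n + 4 - 2 = n + 2 by omega, b_eq_phi, phi_eq_Q]
  have h2 : phi (n + 4) = Q (n + 3) := phi_eq_Q (n + 3)
  have h3 := QQ (n + 1)
  rw [h1, h2, show n + 4 - 1 = n + 3 by omega]
  have h3' : (Q (n + 3) : ℤ) + (Q (n + 1) : ℤ) = ((n : ℤ) + 3) * (Nat.fib (n + 3) : ℤ) := by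
    exact_mod_cast congrArg (Nat.cast : ℕ → ℤ) h3
  push_cast
  linarith
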